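/- arXiv:2512.09839 — 4 statements merged into one kernel-verified Lean document; each statement's English description precedes it below -/
import Mathlib

section
/- Fix N ∈ (0,2) and set a = 1 - N/2. The function u(z) = exp(-|z|^a) satisfies -Δu + Vu = 0 on ℝ² \ {0}, where V(z) = a²(|z|^a - 1)|z|^{a-2} = (1 - N/2)²(|z|^{1-N/2} - 1)|z|^{-1-N/2}. Moreover, for every z with |z| ≥ 1, one has |V(z)| ≤ (1 - N/2)²|z|^{-N}. -/
/-!
Write `u z = g (‖z‖ ^ 2)` with `g s = exp (-s ^ (a / 2))`. For any such function of `‖z‖ ^ 2`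
the chain rule gives `Δu = 4 (‖z‖ ^ 2 g'' + g')`, and for this `g` the two terms combine to
`a ^ 2 (‖z‖ ^ a - 1) ‖z‖ ^ (a - 2) u = V u`. For `‖z‖ ≥ 1` the potential is nonnegative and at
most `a ^ 2 ‖z‖ ^ (2a - 2) = (1 - N/2) ^ 2 ‖z‖ ^ (-N)`.
-/

/-- The Laplacian of a function on the plane (identified with `ℂ`). -/
noncomputable def lap (u : ℂ → ℝ) (z : ℂ) : ℝ :=
  fderiv ℝ (fun w => fderiv ℝ u w 1) z 1 +
    fderiv ℝ (fun w => fderiv ℝ u w Complex.I) z Complex.I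

open Real Filter Topology

section
variable {E : Type*} [NormedAddCommGroup E] [InnerProductSpace ℝ E]

theorem fderiv_fderiv_comp_norm_sq_apply {g g' : ℝ → ℝ} {g'' : ℝ} {x : E}
    (hg : ∀ᶠ s in 𝓝 (‖x‖ ^ 2), HasDerivAt g (g' s) s) (hg' : HasDerivAt g' g'' (‖x‖ ^ 2))
    (v : E) :
    fderiv ℝ (fun y => fderiv ℝ (fun y => g (‖y‖ ^ 2)) y v) x v =
      g'' * (2 * inner ℝ x v) ^ 2 + g' (‖x‖ ^ 2) * (2 * ‖v‖ ^ 2) := by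
  have hfirst : (fun y => fderiv ℝ (fun y => g (‖y‖ ^ 2)) y v) =ᶠ[𝓝 x]
      fun y => g' (‖y‖ ^ 2) * (2 * inner ℝ v y) := by
    have hcont : Continuous fun y : E => ‖y‖ ^ 2 := by fun_prop
    filter_upwards [hcont.continuousAt.eventually hg] with y hy
    have hderiv : HasFDerivAt (fun y => g (‖y‖ ^ 2)) (g' (‖y‖ ^ 2) • 2 • innerSL ℝ y) y :=
      hy.comp_hasFDerivAt y (hasStrictFDerivAt_norm_sq y).hasFDerivAt
    rw [hderiv.fderiv]
    simp [real_inner_comm]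
  have hsecond : HasFDerivAt (fun y => g' (‖y‖ ^ 2) * (2 * inner ℝ v y)) _ x :=
    (hg'.comp_hasFDerivAt x (hasStrictFDerivAt_norm_sq x).hasFDerivAt).mul
      ((innerSL ℝ v).hasFDerivAt.const_mul 2)
  rw [hfirst.fderiv_eq, hsecond.fderiv]
  simp only [Function.comp_apply, real_inner_comm, add_apply, smul_apply, coe_innerSL_apply,
    real_inner_self_eq_norm_sq, smul_eq_mul, nsmul_eq_mul, Nat.cast_ofNat]
  ring

theorem contDiffOn_exp_neg_norm_rpow (a : ℝ) {n : WithTop ℕ∞} :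
    ContDiffOn ℝ n (fun x : E => exp (-‖x‖ ^ a)) {0}ᶜ := fun x hx =>
  (contDiff_exp.contDiffAt.comp x
    ((contDiffAt_norm ℝ hx).rpow_const_of_ne (norm_ne_zero_iff.2 hx)).neg).contDiffWithinAt

end

theorem lap_comp_norm_sq {g g' : ℝ → ℝ} {g'' : ℝ} {z : ℂ}
    (hg : ∀ᶠ s in 𝓝 (‖z‖ ^ 2), HasDerivAt g (g' s) s) (hg' : HasDerivAt g' g'' (‖z‖ ^ 2)) :
    lap (fun w => g (‖w‖ ^ 2)) z = 4 * (‖z‖ ^ 2 * g'' + g' (‖z‖ ^ 2)) := by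
  rw [lap, fderiv_fderiv_comp_norm_sq_apply hg hg', fderiv_fderiv_comp_norm_sq_apply hg hg',
    Complex.sq_norm, Complex.normSq_apply]
  simp only [Complex.inner, Complex.mul_re, Complex.conj_re, Complex.conj_im, Complex.one_re,
    Complex.one_im, Complex.I_re, Complex.I_im, norm_one, Complex.norm_I]
  ring

theorem hasDerivAt_exp_neg_rpow (b : ℝ) {s : ℝ} (hs : 0 < s) :
    HasDerivAt (fun s => exp (-s ^ b)) (-(b * s ^ (b - 1)) * exp (-s ^ b)) s := by
  have h : HasDerivAt (fun s => -s ^ b) (-(b * s ^ (b - 1))) s :=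
    (hasDerivAt_rpow_const (Or.inl hs.ne')).neg
  simpa only [mul_comm] using h.exp

theorem hasDerivAt_deriv_exp_neg_rpow (b : ℝ) {s : ℝ} (hs : 0 < s) :
    HasDerivAt (fun s => -(b * s ^ (b - 1)) * exp (-s ^ b))
      (-(b * ((b - 1) * s ^ (b - 2))) * exp (-s ^ b) + (b * s ^ (b - 1)) ^ 2 * exp (-s ^ b)) s := by
  have h : HasDerivAt (fun s => -(b * s ^ (b - 1)) * exp (-s ^ b)) _ s :=
    (((hasDerivAt_rpow_const (Or.inl hs.ne')).const_mul b).neg).mul (hasDerivAt_exp_neg_rpow b hs)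
  convert h using 1
  rw [Pi.neg_apply, show b - 1 - 1 = b - 2 by ring]
  ring

theorem lap_exp_neg_norm_rpow (a : ℝ) {z : ℂ} (hz : z ≠ 0) :
    lap (fun w => exp (-‖w‖ ^ a)) z = a ^ 2 * (‖z‖ ^ a - 1) * ‖z‖ ^ (a - 2) * exp (-‖z‖ ^ a) := by
  have hr : 0 < ‖z‖ := norm_pos_iff.2 hz
  have hsq_rpow : ∀ (r c : ℝ), 0 ≤ r → (r ^ 2) ^ (c / 2) = r ^ c := fun r c hr0 => by
    rw [← rpow_natCast, ← rpow_mul hr0]; congr 1; ring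
  have hu : (fun w : ℂ => exp (-‖w‖ ^ a)) = fun w => exp (-(‖w‖ ^ 2) ^ (a / 2)) := by
    simp only [hsq_rpow _ _ (norm_nonneg _)]
  have hg : ∀ᶠ s in 𝓝 (‖z‖ ^ 2), HasDerivAt (fun s => exp (-s ^ (a / 2)))
      (-(a / 2 * s ^ (a / 2 - 1)) * exp (-s ^ (a / 2))) s := by
    filter_upwards [Ioi_mem_nhds (by positivity)] with s hs using hasDerivAt_exp_neg_rpow _ hs
  rw [hu, lap_comp_norm_sq hg (hasDerivAt_deriv_exp_neg_rpow _ (by positivity)),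
    show a / 2 - 1 = (a - 2) / 2 by ring, show a / 2 - 2 = (a - 4) / 2 by ring,
    hsq_rpow _ _ hr.le, hsq_rpow _ _ hr.le, hsq_rpow _ _ hr.le]
  have h1 : ‖z‖ ^ a = ‖z‖ ^ 2 * ‖z‖ ^ (a - 2) := by
    rw [← rpow_two, ← rpow_add hr]; ring_nf
  have h2 : ‖z‖ ^ 2 * ‖z‖ ^ (a - 4) = ‖z‖ ^ (a - 2) := by
    rw [← rpow_two, ← rpow_add hr]; ring_nf
  rw [h1, ← h2]
  ring

theorem abs_sq_mul_rpow_sub_one_mul_rpow_le {a r : ℝ} (ha : 0 ≤ a) (hr : 1 ≤ r) :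
    |a ^ 2 * (r ^ a - 1) * r ^ (a - 2)| ≤ a ^ 2 * r ^ (2 * a - 2) := by
  have hr0 : 0 < r := one_pos.trans_le hr
  have hra : 1 ≤ r ^ a := one_le_rpow hr ha
  rw [abs_of_nonneg (by have := rpow_nonneg hr0.le (a - 2); positivity)]
  calc a ^ 2 * (r ^ a - 1) * r ^ (a - 2)
      ≤ a ^ 2 * r ^ a * r ^ (a - 2) := by gcongr; linarith
    _ = a ^ 2 * r ^ (2 * a - 2) := by rw [mul_assoc, ← rpow_add hr0]; ring_nf

theorem sharpness_example_general
    (N a : ℝ) (hN' : N < 2) (ha : a = 1 - N / 2)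
    (u V : ℂ → ℝ)
    (hu : ∀ z : ℂ, u z = Real.exp (-(‖z‖ ^ a)))
    (hV : ∀ z : ℂ, V z = a ^ 2 * (‖z‖ ^ a - 1) * ‖z‖ ^ (a - 2)) :
    ContDiffOn ℝ 2 u {(0 : ℂ)}ᶜ ∧
    (∀ z : ℂ, z ≠ 0 → -lap u z + V z * u z = 0) ∧
    (∀ z : ℂ, V z = (1 - N / 2) ^ 2 * (‖z‖ ^ (1 - N / 2) - 1) * ‖z‖ ^ (-1 - N / 2)) ∧
    (∀ z : ℂ, 1 ≤ ‖z‖ → |V z| ≤ (1 - N / 2) ^ 2 * ‖z‖ ^ (-N)) := by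
  have hu' : u = fun w => Real.exp (-‖w‖ ^ a) := funext hu
  refine ⟨hu' ▸ contDiffOn_exp_neg_norm_rpow a, fun z hz => ?_, fun z => ?_, fun z hz => ?_⟩
  · rw [hu', lap_exp_neg_norm_rpow a hz, hV]
    ring
  · rw [hV, ha, show 1 - N / 2 - 2 = -1 - N / 2 by ring]
  · have hbound := abs_sq_mul_rpow_sub_one_mul_rpow_le (by linarith : 0 ≤ a) hz
    rwa [← hV, show 2 * a - 2 = -N by rw [ha]; ring, ha] at hbound

/-- Sharpness example: for `N ∈ (0,2)` and `a = 1 - N/2`, the function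
`u z = exp (-|z| ^ a)` solves `-Δu + Vu = 0` on `ℝ² \ {0}` with
`V z = a² (|z| ^ a - 1) |z| ^ (a - 2)`, and `|V z| ≤ (1 - N/2)² |z| ^ (-N)`
whenever `|z| ≥ 1`. -/
theorem sharpness_example
    (N a : ℝ) (hN : 0 < N) (hN' : N < 2) (ha : a = 1 - N / 2)
    (u V : ℂ → ℝ)
    (hu : ∀ z : ℂ, u z = Real.exp (-(‖z‖ ^ a)))
    (hV : ∀ z : ℂ, V z = a ^ 2 * (‖z‖ ^ a - 1) * ‖z‖ ^ (a - 2)) :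
    ContDiffOn ℝ 2 u {(0 : ℂ)}ᶜ ∧
    (∀ z : ℂ, z ≠ 0 → -lap u z + V z * u z = 0) ∧
    (∀ z : ℂ, V z = (1 - N / 2) ^ 2 * (‖z‖ ^ (1 - N / 2) - 1) * ‖z‖ ^ (-1 - N / 2)) ∧
    (∀ z : ℂ, 1 ≤ ‖z‖ → |V z| ≤ (1 - N / 2) ^ 2 * ‖z‖ ^ (-N)) :=
  sharpness_example_general N a hN' ha u V hu hV
end

section
/- Let α > 1, let z₀ = (r₀, 0) ∈ ℝ², and set r̃ = r₀^{1-α}/(2√3 α). There exists r_α > 0 such that whenever r₀ ≥ r_α, both containments hold: T_α(B_{r̃}(z₀)) ⊂ B₁(T_α(z₀)) and B₁(T_α(z₀)) ⊂ T_α(B₁(z₀)). -/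
/-!
Away from `0`, `T_α` is the principal power `z ↦ z ^ α`, holomorphic off the negative real axis
with derivative of modulus `α |z| ^ (α - 1)`. On `B_r̃(r₀)` we have `|z| ≤ r₀ + r̃` and
`(1 + r̃ / r₀) ^ (α - 1) ≤ e`, so the mean value inequality gives
`|T_α z - r₀ ^ α| < α (r₀ + r̃) ^ (α - 1) r̃ ≤ e / (2√3) < 1`. Conversely, on `B₁(r₀ ^ α)` the
power `w ↦ w ^ (1 / α)` is a right inverse of `T_α`, and it is `1 / α`-Lipschitz there because
`|w| ≥ 1`; it maps `r₀ ^ α` to `r₀`. Both arguments work as soon as `r₀ ≥ 2`.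
-/

open Metric

/-- Real-variable version of the conformal map `z ↦ z ^ α`, in polar coordinates
`(r, θ) ↦ (r ^ α, α θ)`. -/
noncomputable def Tmap (α : ℝ) (z : ℂ) : ℂ :=
  Complex.ofReal (‖z‖ ^ α) * Complex.exp (Complex.I * Complex.ofReal (α * Complex.arg z))

open Complex

lemma Tmap_eq_cpow (α : ℝ) {z : ℂ} (hz : z ≠ 0) : Tmap α z = z ^ (α : ℂ) := by
  rw [cpow_def_of_ne_zero hz, Complex.log, Tmap, Real.rpow_def_of_pos (norm_pos_iff.2 hz),
    ofReal_exp, ← Complex.exp_add]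
  push_cast
  ring_nf

lemma Tmap_ofReal {r : ℝ} (hr : 0 ≤ r) (α : ℝ) : Tmap α r = ((r ^ α : ℝ) : ℂ) := by
  simp [Tmap, arg_ofReal_of_nonneg hr, abs_of_nonneg hr]

lemma Tmap_cpow_inv {α : ℝ} (hα : 1 ≤ α) {w : ℂ} (hw : w ≠ 0) :
    Tmap α (w ^ ((α⁻¹ : ℝ) : ℂ)) = w := by
  have hinv_pos : 0 < α⁻¹ := by positivity
  have hinv_le : α⁻¹ ≤ 1 := inv_le_one_of_one_le₀ hα
  have him : (log w * ((α⁻¹ : ℝ) : ℂ)).im = arg w * α⁻¹ := by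
    simp [mul_im, log_im]
  have h_lo := neg_pi_lt_arg w
  have h_hi := arg_le_pi w
  have hπ := Real.pi_pos
  -- `arg w / α` lies between `0` and `arg w`, so it stays in `(-π, π]`.
  rw [Tmap_eq_cpow α (cpow_ne_zero_iff.2 (.inl hw)), ← cpow_mul _ (by rw [him]; nlinarith)
    (by rw [him]; nlinarith), ← ofReal_mul, inv_mul_cancel₀ (by positivity), ofReal_one, cpow_one]

lemma sub_lt_re_of_mem_ball {c r : ℝ} {x : ℂ} (hx : x ∈ ball (c : ℂ) r) : c - r < x.re := by
  rw [mem_ball, dist_eq_norm] at hx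
  have := (abs_le.1 (abs_re_le_norm (x - c))).1
  simp only [sub_re, ofReal_re] at this
  linarith

lemma ball_ofReal_subset_slitPlane {c r : ℝ} (h : r ≤ c) : ball (c : ℂ) r ⊆ slitPlane :=
  fun x hx ↦ mem_slitPlane_iff.2 (.inl (by linarith [sub_lt_re_of_mem_ball hx]))

lemma norm_le_of_mem_ball {c r : ℝ} (hc : 0 ≤ c) {x : ℂ} (hx : x ∈ ball (c : ℂ) r) :
    ‖x‖ ≤ c + r := by
  have := norm_le_norm_add_norm_sub' x c
  rw [mem_ball, dist_eq_norm] at hx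
  rw [norm_real, Real.norm_of_nonneg hc] at this
  linarith

lemma norm_cpow_sub_cpow_le {s : Set ℂ} (hs : Convex ℝ s) (hslit : s ⊆ slitPlane) {p C : ℝ}
    (hC : ∀ x ∈ s, |p| * ‖x‖ ^ (p - 1) ≤ C) {z w : ℂ} (hz : z ∈ s) (hw : w ∈ s) :
    ‖z ^ (p : ℂ) - w ^ (p : ℂ)‖ ≤ C * ‖z - w‖ := by
  refine hs.norm_image_sub_le_of_norm_hasDerivWithin_le
    (fun x hx ↦ (hasStrictDerivAt_cpow_const (hslit hx)).hasDerivAt.hasDerivWithinAt)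
    (fun x hx ↦ ?_) hw hz
  rw [show (p : ℂ) - 1 = ((p - 1 : ℝ) : ℂ) by push_cast; rfl, norm_mul, norm_cpow_real, norm_real,
    Real.norm_eq_abs]
  exact hC x hx

lemma one_add_rpow_le_exp_mul {x p : ℝ} (hx : -1 ≤ x) (hp : 0 ≤ p) :
    (1 + x) ^ p ≤ Real.exp (p * x) :=
  calc (1 + x) ^ p ≤ Real.exp x ^ p :=
        Real.rpow_le_rpow (by linarith) (by linarith [Real.add_one_le_exp x]) hp
    _ = Real.exp (p * x) := by rw [← Real.exp_mul, mul_comm]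

lemma three_lt_two_mul_sqrt_three : 3 < 2 * √3 := by
  have : 3 / 2 < √3 := (Real.lt_sqrt (by norm_num)).2 (by norm_num)
  linarith

/-- The radius `r̃` of the paper. -/
noncomputable def smallRadius (α r₀ : ℝ) : ℝ := r₀ ^ (1 - α) / (2 * √3 * α)

section smallRadius

variable {α r₀ : ℝ} (hα : 1 ≤ α) (hr₀ : 1 ≤ r₀)
include hα hr₀

lemma smallRadius_pos : 0 < smallRadius α r₀ := by
  unfold smallRadius
  have : 0 < r₀ := by linarith
  positivity

lemma mul_smallRadius_le_one : α * smallRadius α r₀ ≤ 1 := by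
  have h3 := three_lt_two_mul_sqrt_three
  rw [smallRadius, mul_div_assoc', div_le_one (by positivity)]
  nlinarith [Real.rpow_le_one_of_one_le_of_nonpos hr₀ (by linarith : 1 - α ≤ 0)]

lemma smallRadius_le : smallRadius α r₀ ≤ r₀ := by
  nlinarith [mul_smallRadius_le_one hα hr₀, smallRadius_pos hα hr₀]

-- `(r₀ + r̃) ^ (α - 1) ≤ e r₀ ^ (α - 1)` because `(α - 1) r̃ / r₀ ≤ 1`, and `e < 3 < 2√3`.
lemma mul_add_smallRadius_rpow_mul_lt_one :
    α * (r₀ + smallRadius α r₀) ^ (α - 1) * smallRadius α r₀ < 1 := by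
  set ρ := smallRadius α r₀
  have hr₀_pos : 0 < r₀ := by linarith
  have hρ_pos : 0 < ρ := smallRadius_pos hα hr₀
  have hαρ : α * ρ ≤ 1 := mul_smallRadius_le_one hα hr₀
  have h3 := three_lt_two_mul_sqrt_three
  have hgrowth : (1 + ρ / r₀) ^ (α - 1) < 3 := by
    refine (one_add_rpow_le_exp_mul (by linarith [div_pos hρ_pos hr₀_pos]) (by linarith)).trans_lt
      (lt_of_le_of_lt (Real.exp_le_exp.2 ?_) (Real.exp_one_lt_d9.trans (by norm_num)))
    calc (α - 1) * (ρ / r₀) ≤ (α - 1) * ρ :=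
          mul_le_mul_of_nonneg_left (div_le_self hρ_pos.le hr₀) (by linarith)
      _ ≤ 1 := by linarith
  have hsplit : α * (r₀ + ρ) ^ (α - 1) * ρ = (1 + ρ / r₀) ^ (α - 1) / (2 * √3) := by
    have : r₀ ^ (α - 1) * r₀ ^ (1 - α) = 1 := by rw [← Real.rpow_add hr₀_pos]; simp
    rw [show r₀ + ρ = r₀ * (1 + ρ / r₀) by field_simp, Real.mul_rpow hr₀_pos.le (by positivity)]
    simp only [ρ, smallRadius]
    field_simp
    linear_combination this
  rw [hsplit, div_lt_one (by positivity)]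
  linarith

lemma Tmap_image_ball_subset_ball_one :
    Tmap α '' ball (r₀ : ℂ) (smallRadius α r₀) ⊆ ball (Tmap α r₀) 1 := by
  have hr₀_pos : 0 < r₀ := by linarith
  have hslit := ball_ofReal_subset_slitPlane (smallRadius_le hα hr₀)
  set C := α * (r₀ + smallRadius α r₀) ^ (α - 1)
  rintro _ ⟨z, hz, rfl⟩
  rw [mem_ball, dist_eq_norm, Tmap_eq_cpow α (slitPlane_ne_zero (hslit hz)),
    Tmap_eq_cpow α (by exact_mod_cast hr₀_pos.ne')]
  calc ‖z ^ (α : ℂ) - (r₀ : ℂ) ^ (α : ℂ)‖ ≤ C * ‖z - r₀‖ :=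
        norm_cpow_sub_cpow_le (convex_ball _ _) hslit
          (fun x hx ↦ by
            rw [abs_of_nonneg (by linarith)]
            simp only [C]
            gcongr
            exact norm_le_of_mem_ball hr₀_pos.le hx)
          hz (mem_ball_self (smallRadius_pos hα hr₀))
    _ < C * smallRadius α r₀ := by
        have : 0 < C := mul_pos (by linarith)
          (Real.rpow_pos_of_pos (by linarith [smallRadius_pos hα hr₀]) _)
        gcongr
        rwa [mem_ball, dist_eq_norm] at hz
    _ < 1 := mul_add_smallRadius_rpow_mul_lt_one hα hr₀

end smallRadius

lemma ball_one_subset_Tmap_image_ball_one {α r₀ : ℝ} (hα : 1 ≤ α) (hr₀ : 2 ≤ r₀) :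
    ball (Tmap α r₀) 1 ⊆ Tmap α '' ball (r₀ : ℂ) 1 := by
  have hr₀_pos : 0 < r₀ := by linarith
  have hinv_le : α⁻¹ ≤ 1 := inv_le_one_of_one_le₀ hα
  set c := r₀ ^ α
  have hc : 2 ≤ c := hr₀.trans (Real.self_le_rpow_of_one_le (by linarith) hα)
  have hslit : ball (c : ℂ) 1 ⊆ slitPlane := ball_ofReal_subset_slitPlane (by linarith)
  have hc_root : (c : ℂ) ^ ((α⁻¹ : ℝ) : ℂ) = r₀ := by
    rw [← ofReal_cpow (by positivity), ← Real.rpow_mul hr₀_pos.le,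
      mul_inv_cancel₀ (by linarith), Real.rpow_one]
  rw [Tmap_ofReal hr₀_pos.le]
  intro w hw
  refine ⟨w ^ ((α⁻¹ : ℝ) : ℂ), ?_, Tmap_cpow_inv hα (slitPlane_ne_zero (hslit hw))⟩
  rw [mem_ball, dist_eq_norm] at hw ⊢
  rw [← hc_root]
  calc ‖w ^ ((α⁻¹ : ℝ) : ℂ) - (c : ℂ) ^ ((α⁻¹ : ℝ) : ℂ)‖ ≤ α⁻¹ * ‖w - c‖ :=
        norm_cpow_sub_cpow_le (convex_ball _ _) hslit
          (fun x hx ↦ by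
            have hx_norm : 1 ≤ ‖x‖ := by
              linarith [sub_lt_re_of_mem_ball hx, re_le_norm x]
            rw [abs_of_pos (by positivity)]
            exact mul_le_of_le_one_right (by positivity)
              (Real.rpow_le_one_of_one_le_of_nonpos hx_norm (by linarith)))
          (mem_ball_iff_norm.2 hw) (mem_ball_self one_pos)
    _ ≤ ‖w - c‖ := mul_le_of_le_one_left (norm_nonneg _) hinv_le
    _ < 1 := hw

/-- Ball containment: for `α > 1`, `z₀ = (r₀, 0)` and `r̃ = r₀^{1-α}/(2√3 α)`, there is
`r_α > 0` such that for all `r₀ ≥ r_α`, `T_α (B_{r̃}(z₀)) ⊆ B₁(T_α z₀)` and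
`B₁(T_α z₀) ⊆ T_α (B₁(z₀))`. -/
theorem ball_containment (α : ℝ) (hα : 1 < α) :
    ∃ r_α > (0 : ℝ), ∀ r₀ : ℝ, r_α ≤ r₀ →
      Tmap α '' ball ((r₀ : ℂ)) (r₀ ^ (1 - α) / (2 * Real.sqrt 3 * α)) ⊆
          ball (Tmap α (r₀ : ℂ)) 1 ∧
        ball (Tmap α (r₀ : ℂ)) 1 ⊆ Tmap α '' ball ((r₀ : ℂ)) 1 :=
  ⟨2, two_pos, fun _ hr₀ ↦ ⟨Tmap_image_ball_subset_ball_one hα.le (by linarith),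
    ball_one_subset_Tmap_image_ball_one hα.le hr₀⟩⟩
end

section
/- Let R and S be real numbers with 2^8 ≤ S ≤ R/2. Then log((R - 7)/(R - S/32)) > S/(2^9 R). -/
/-- Elementary logarithm estimate: if `2^8 ≤ S ≤ R/2`, then
`log ((R - 7)/(R - S/32)) > S/(2^9 R)`. -/
theorem log_estimate (R S : ℝ) (hS : (2 : ℝ) ^ 8 ≤ S) (hSR : S ≤ R / 2) :
    S / (2 ^ 9 * R) < Real.log ((R - 7) / (R - S / 32)) := by
  have hR : (2 : ℝ) ^ 9 ≤ R := by norm_num at hS hSR ⊢; linarith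
  have h1 : (0 : ℝ) < R - S / 32 := by nlinarith
  have h2 : (0 : ℝ) < R - 7 := by nlinarith
  have hxpos : 0 < (R - 7) / (R - S / 32) := div_pos h2 h1
  have hlog := Real.one_sub_inv_le_log_of_pos hxpos
  have hxinv : ((R - 7) / (R - S / 32))⁻¹ = (R - S / 32) / (R - 7) := inv_div _ _
  have heq : 1 - (R - S / 32) / (R - 7) = (S / 32 - 7) / (R - 7) := by
    field_simp
    ring
  have key : S / (2 ^ 9 * R) < (S / 32 - 7) / (R - 7) := by
    rw [div_lt_div_iff₀ (by positivity) h2]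
    nlinarith
  calc S / (2 ^ 9 * R) < (S / 32 - 7) / (R - 7) := key
    _ = 1 - ((R - 7) / (R - S / 32))⁻¹ := by rw [hxinv, heq]
    _ ≤ _ := hlog
end

section
/- Let r₀ > 0, let z₀ = (r₀, 0) ∈ ℝ², and let 0 < r̃ ≤ r₀/2. Then every z ∈ ℝ² with |z - z₀| ≤ r̃ satisfies r₀ - r̃ ≤ |z| ≤ r₀ + r̃ and its polar angle θ (i.e., z = (|z| cos θ, |z| sin θ) with θ ∈ (-π, π]) satisfies |θ| ≤ 2r̃/(√3 r₀). -/
/-!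
Write `θ = arg z`. The law of cosines gives
`‖z - r₀‖² = (‖z‖ - r₀ cos θ)² + (r₀ sin θ)²`, so `r₀ |sin θ| ≤ r̃ ≤ r₀ / 2` and hence
`cos θ ≥ √3 / 2`. Since `Re z ≥ r₀ - r̃ > 0`, we have `|θ| < π / 2`, where
`|θ| ≤ tan |θ| = |sin θ| / cos θ ≤ (r̃ / r₀) / (√3 / 2)`.
-/

open Real

theorem Complex.norm_sub_ofReal_sq (z : ℂ) (x : ℝ) :
    ‖z - x‖ ^ 2 = (‖z‖ - x * Real.cos (arg z)) ^ 2 + (x * Real.sin (arg z)) ^ 2 := by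
  have hre : z.re = ‖z‖ * Real.cos (arg z) := (Complex.norm_mul_cos_arg z).symm
  have him : z.im = ‖z‖ * Real.sin (arg z) := (Complex.norm_mul_sin_arg z).symm
  rw [Complex.sq_norm, Complex.normSq_apply, Complex.sub_re, Complex.sub_im, Complex.ofReal_re,
    Complex.ofReal_im, sub_zero, hre, him]
  linear_combination (‖z‖ ^ 2 - x ^ 2) * Real.sin_sq_add_cos_sq (arg z)

theorem Complex.abs_mul_sin_arg_le_norm_sub (z : ℂ) (x : ℝ) :
    |x * Real.sin (arg z)| ≤ ‖z - x‖ := by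
  rw [← sq_le_sq₀ (abs_nonneg _) (norm_nonneg _), sq_abs, norm_sub_ofReal_sq]
  exact le_add_of_nonneg_left (sq_nonneg _)

theorem Real.abs_mul_cos_le_abs_sin {θ : ℝ} (hθ : |θ| < π / 2) : |θ| * cos θ ≤ |sin θ| := by
  have hcos : 0 < cos θ := by
    rw [← cos_abs]; exact cos_pos_of_mem_Ioo ⟨by linarith [abs_nonneg θ, pi_pos], hθ⟩
  rw [abs_sin_eq_sin_abs_of_abs_le_pi (by linarith [pi_pos]), ← le_div_iff₀ hcos, ← cos_abs,
    ← tan_eq_sin_div_cos]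
  exact le_tan (abs_nonneg θ) hθ

theorem Real.sqrt_three_div_two_le_cos {θ : ℝ} (hθ : |θ| ≤ π / 2) (hsin : |sin θ| ≤ 1 / 2) :
    √3 / 2 ≤ cos θ := by
  obtain ⟨hl, hu⟩ := abs_le.mp hθ
  rw [cos_eq_sqrt_one_sub_sin_sq hl hu, show √3 / 2 = √(3 / 4) by
    rw [Real.sqrt_div' _ (by norm_num : (0:ℝ) ≤ 4)]; norm_num]
  gcongr
  nlinarith [sq_abs (sin θ), abs_nonneg (sin θ)]

theorem ball_in_polar_rectangle_general (r₀ rt : ℝ) (hr₀ : 0 < r₀)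
    (hrt' : rt ≤ r₀ / 2) :
    ∀ z : ℂ, ‖z - (r₀ : ℂ)‖ ≤ rt →
      r₀ - rt ≤ ‖z‖ ∧ ‖z‖ ≤ r₀ + rt ∧
        |Complex.arg z| ≤ 2 * rt / (Real.sqrt 3 * r₀) := by
  intro z hz
  have hnorm : |‖z‖ - r₀| ≤ rt := by
    simpa [abs_of_pos hr₀] using (abs_norm_sub_norm_le z r₀).trans hz
  obtain ⟨hlow, hhigh⟩ := abs_le.mp hnorm
  refine ⟨by linarith, by linarith, ?_⟩
  set θ := Complex.arg z
  have hre : 0 < z.re := by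
    have := (Complex.abs_re_le_norm (z - r₀)).trans hz
    simp only [Complex.sub_re, Complex.ofReal_re] at this
    linarith [neg_abs_le (z.re - r₀)]
  have hθ : |θ| < π / 2 := Complex.abs_arg_lt_pi_div_two_iff.mpr (Or.inl hre)
  have hsin : |sin θ| ≤ rt / r₀ := by
    have := (Complex.abs_mul_sin_arg_le_norm_sub z r₀).trans hz
    rw [abs_mul, abs_of_pos hr₀] at this
    rwa [le_div_iff₀' hr₀]
  have hcos : √3 / 2 ≤ cos θ := sqrt_three_div_two_le_cos hθ.le <| hsin.trans <| by
    rw [div_le_iff₀ hr₀]; linarith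
  calc |θ| ≤ |sin θ| / cos θ := by
        rw [le_div_iff₀ ((by positivity : (0 : ℝ) < √3 / 2).trans_le hcos)]
        exact abs_mul_cos_le_abs_sin hθ
    _ ≤ (rt / r₀) / (√3 / 2) := by gcongr; exact (abs_nonneg _).trans hsin
    _ = 2 * rt / (√3 * r₀) := by field_simp

/-- A Euclidean ball around `z₀ = (r₀, 0)` of radius `r̃ ≤ r₀/2` is contained in the
polar rectangle `{ r₀ - r̃ ≤ r ≤ r₀ + r̃, |θ| ≤ 2r̃/(√3 r₀) }`. -/
theorem ball_in_polar_rectangle (r₀ rt : ℝ) (hr₀ : 0 < r₀) (hrt : 0 < rt)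
    (hrt' : rt ≤ r₀ / 2) :
    ∀ z : ℂ, ‖z - (r₀ : ℂ)‖ ≤ rt →
      r₀ - rt ≤ ‖z‖ ∧ ‖z‖ ≤ r₀ + rt ∧
        |Complex.arg z| ≤ 2 * rt / (Real.sqrt 3 * r₀) :=
  ball_in_polar_rectangle_general r₀ rt hr₀ hrt'
end
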